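/- Let G ∼ G(n, 1/2). Fix S ⊆ V with |S| = k even and 0 < k < n, and set S̄ = V \ S. Fix vertices s ∈ S and t ∈ S̄. Then, conditioned on the event that the set of odd-degree vertices of G equals S, the triple consisting of the induced subgraph G[S], the induced subgraph G[S̄], and the bipartite graph of edges between S \ {s} and S̄ \ {t} is distributed as independent samples from G(k, 1/2), G(n−k, 1/2), and the bipartite random graph G(k−1, n−k−1, 1/2), respectively. -/

import Mathlib

/-- Index type for the potential edges of a simple graph on `Fin n`. -/
abbrev EdgeIdx (n : ℕ) := {p : Fin n × Fin n // p.1 < p.2}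

/-- The degree of vertex `u` in the graph described by the edge-indicator `g`. -/
def gDegree (n : ℕ) (g : EdgeIdx n → Bool) (u : Fin n) : ℕ :=
  (Finset.univ.filter fun e : EdgeIdx n => g e = true ∧ (e.1.1 = u ∨ e.1.2 = u)).card

/-- The set of odd-degree vertices of the graph described by `g`. -/
def oddSet (n : ℕ) (g : EdgeIdx n → Bool) : Finset (Fin n) :=
  Finset.univ.filter fun u => Odd (gDegree n g u)

/-
Fix a spanning tree `T` of the complete graph. Among the edge sets with odd-vertex set `S`,
each is determined by its restriction to the edges outside `T`: peeling `T` leaf by leaf, the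
parity at a leaf forces the state of its tree edge. Conversely every restriction extends, by
choosing the tree edges leaf by leaf, the handshake lemma taking care of the last vertex. For
the star at `t` this counts the conditioning event as `2 ^ C(n-1, 2)`. The unprescribed edges
(from `s` to `Sᶜ` and from `t` to `S`) form a double star, so each prescription of the remaining
`C(k, 2) + C(n-k, 2) + (k-1)(n-k-1) = C(n-1, 2)` edges is met by exactly one graph.
-/

open Finset Function

namespace EdgeIdx

variable {n : ℕ} {u v : Fin n} {e e' : EdgeIdx n}

abbrev Inc (u : Fin n) (e : EdgeIdx n) : Prop := e.1.1 = u ∨ e.1.2 = u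

def other (u : Fin n) (e : EdgeIdx n) : Fin n := if e.1.1 = u then e.1.2 else e.1.1

lemma exists_inc_inc (h : u ≠ v) : ∃ e : EdgeIdx n, Inc u e ∧ Inc v e := by
  rcases h.lt_or_gt with h | h
  exacts [⟨⟨(u, v), h⟩, .inl rfl, .inr rfl⟩, ⟨⟨(v, u), h⟩, .inr rfl, .inl rfl⟩]

lemma eq_of_inc_of_inc (huv : u ≠ v) (hu : Inc u e) (hv : Inc v e) (hu' : Inc u e')
    (hv' : Inc v e') : e = e' := by
  have := e.2; have := e'.2
  rcases e with ⟨⟨a, b⟩, hab⟩; rcases e' with ⟨⟨a', b'⟩, hab'⟩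
  simp only [Inc] at *
  ext <;> simp only <;> omega

lemma inc_other (u : Fin n) (e : EdgeIdx n) : Inc (other u e) e := by
  unfold other Inc; split <;> simp

lemma other_ne (u : Fin n) (e : EdgeIdx n) : other u e ≠ u := by
  have := e.2
  unfold other; split <;> omega

lemma other_eq_of_inc (huv : u ≠ v) (hu : Inc u e) (hv : Inc v e) : other u e = v := by
  have := e.2
  unfold other Inc at *; split <;> omega

end EdgeIdx

open EdgeIdx

variable {n : ℕ} {g g' : EdgeIdx n → Bool} {u : Fin n} {e e₀ : EdgeIdx n}

lemma gDegree_congr (h : ∀ e, Inc u e → g e = g' e) : gDegree n g u = gDegree n g' u := by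
  unfold gDegree
  congr 1
  refine filter_congr fun e _ => ?_
  by_cases he : Inc u e
  · rw [h e he]
  · exact iff_of_false (fun h' => he h'.2) (fun h' => he h'.2)

lemma gDegree_eq_update_add (h₀ : Inc u e₀) :
    gDegree n g u = gDegree n (update g e₀ false) u + (g e₀).toNat := by
  have hrest :
      ∑ e ∈ univ.erase e₀, (if update g e₀ false e = true ∧ Inc u e then 1 else 0) =
        ∑ e ∈ univ.erase e₀, (if g e = true ∧ Inc u e then 1 else 0) :=
    sum_congr rfl fun e he => by rw [update_of_ne (ne_of_mem_erase he)]
  unfold gDegree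
  rw [card_filter, card_filter, ← add_sum_erase _ _ (mem_univ e₀),
    ← add_sum_erase _ _ (mem_univ e₀), hrest]
  cases g e₀ <;> simp [h₀, add_comm]

lemma eq_of_agree_of_odd_gDegree_iff (h₀ : Inc u e₀)
    (hagree : ∀ e, Inc u e → e ≠ e₀ → g e = g' e)
    (hodd : Odd (gDegree n g u) ↔ Odd (gDegree n g' u)) : g e₀ = g' e₀ := by
  have hbase : gDegree n (update g e₀ false) u = gDegree n (update g' e₀ false) u := by
    refine gDegree_congr fun e he => ?_
    by_cases hne : e = e₀
    · simp [hne]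
    · simp [update_of_ne hne, hagree e he hne]
  rw [gDegree_eq_update_add h₀, gDegree_eq_update_add (g := g') h₀, hbase] at hodd
  revert hodd
  cases g e₀ <;> cases g' e₀ <;> simp [← Nat.not_even_iff_odd, Nat.even_add_one]

lemma mem_oddSet : u ∈ oddSet n g ↔ Odd (gDegree n g u) := by simp [oddSet]

lemma sum_gDegree (g : EdgeIdx n → Bool) : ∑ u, gDegree n g u = 2 * #{e | g e = true} := by
  calc ∑ u, gDegree n g u = ∑ u, ∑ e, if g e = true ∧ Inc u e then 1 else 0 := by
        simp only [gDegree, card_filter]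
    _ = ∑ e, ∑ u, if g e = true ∧ Inc u e then 1 else 0 := sum_comm
    _ = ∑ e, if g e = true then 2 else 0 := sum_congr rfl fun e _ => ?_
    _ = 2 * #{e | g e = true} := by
        rw [sum_ite, sum_const_zero, sum_const, smul_eq_mul, mul_comm, add_zero]
  cases g e
  · simp
  · have : ({u | Inc u e} : Finset (Fin n)) = {e.1.1, e.1.2} := by ext; simp [Inc, eq_comm]
    simp [this, card_pair (ne_of_lt e.2)]

lemma even_card_oddSet (g : EdgeIdx n → Bool) : Even #(oddSet n g) :=
  (even_sum_iff_even_card_odd _).mp (by rw [sum_gDegree]; exact even_two_mul _)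

lemma oddSet_eq_of_forall_ne {S : Finset (Fin n)} {t : Fin n} (hS : Even #S) (ht : t ∉ S)
    (h : ∀ u, u ≠ t → (Odd (gDegree n g u) ↔ u ∈ S)) : oddSet n g = S := by
  have herase : (oddSet n g).erase t = S := by
    ext u
    by_cases hu : u = t
    · simp [hu, ht]
    · simp [hu, mem_oddSet, h u hu]
  by_cases htg : t ∈ oddSet n g
  · have hcard : #S + 1 = #(oddSet n g) := herase ▸ card_erase_add_one htg
    exact (Nat.even_add_one.mp (hcard ▸ even_card_oddSet g) hS).elim
  · rwa [erase_eq_of_notMem htg] at herase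

lemma eq_of_oddSet_eq_of_agree_off_star (t : Fin n) (hodd : oddSet n g = oddSet n g')
    (h : ∀ e, ¬Inc t e → g e = g' e) : g = g' := by
  funext e
  by_cases he : Inc t e
  · refine eq_of_agree_of_odd_gDegree_iff (inc_other t e) (fun e' hu hne => h e' fun ht => ?_)
      (by rw [← mem_oddSet, ← mem_oddSet, hodd])
    exact hne (eq_of_inc_of_inc (other_ne t e) hu ht (inc_other t e) he)
  · exact h e he

/-- Re-chooses every edge `cu` with `u ∈ L` so that `u` gets odd degree exactly when `u ∈ S`;
the new state of `cu` depends only on the other edges at `u`. -/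
def adjustStar (c : Fin n) (L S : Finset (Fin n)) (g : EdgeIdx n → Bool) : EdgeIdx n → Bool :=
  fun e => if Inc c e ∧ other c e ∈ L then
    decide (other c e ∈ S) != decide (Odd (gDegree n (update g e false) (other c e)))
  else g e

section adjustStar

variable {c : Fin n} {L S : Finset (Fin n)}

lemma adjustStar_of_not (h : ¬(Inc c e ∧ other c e ∈ L)) : adjustStar c L S g e = g e :=
  if_neg h

lemma odd_gDegree_adjustStar (hu : u ∈ L) (huc : u ≠ c) :
    Odd (gDegree n (adjustStar c L S g) u) ↔ u ∈ S := by
  obtain ⟨e₀, hu₀, hc₀⟩ := exists_inc_inc huc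
  have hother : other c e₀ = u := other_eq_of_inc huc.symm hc₀ hu₀
  have hbase : gDegree n (update (adjustStar c L S g) e₀ false) u =
      gDegree n (update g e₀ false) u := by
    refine gDegree_congr fun e he => ?_
    by_cases hne : e = e₀
    · simp [hne]
    · rw [update_of_ne hne, update_of_ne hne, adjustStar_of_not]
      exact fun hce => hne (eq_of_inc_of_inc huc he hce.1 hu₀ hc₀)
  rw [gDegree_eq_update_add hu₀, hbase, adjustStar, if_pos ⟨hc₀, hother ▸ hu⟩, hother]
  by_cases huS : u ∈ S <;>
    rcases Nat.even_or_odd (gDegree n (update g e₀ false) u) with h | h <;>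
    simp [huS, h, ← Nat.not_even_iff_odd]

lemma gDegree_adjustStar_of_notMem (hu : u ∉ L) (huc : u ≠ c) :
    gDegree n (adjustStar c L S g) u = gDegree n g u :=
  gDegree_congr fun _ he =>
    adjustStar_of_not fun hce => hu (other_eq_of_inc huc.symm hce.1 he ▸ hce.2)

end adjustStar

lemma card_not_inc (t : Fin n) : Fintype.card {e : EdgeIdx n // ¬Inc t e} = (n - 1).choose 2 := by
  have h := card_product_filter_lt (s := univ.erase t)
  rw [card_erase_of_mem (mem_univ t), card_univ, Fintype.card_fin, ← card_subtype] at h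
  rw [Fintype.card_subtype, ← h]
  congr 1
  ext e
  simp [Inc, eq_comm]

lemma card_filter_oddSet_eq {S : Finset (Fin n)} {t : Fin n} (hS : Even #S) (ht : t ∉ S) :
    #{g : EdgeIdx n → Bool | oddSet n g = S} = 2 ^ (n - 1).choose 2 := by
  rw [← card_not_inc t, ← Fintype.card_bool, ← Fintype.card_fun, ← card_univ]
  refine card_nbij (fun g e => g e.1) (fun _ _ => mem_univ _) ?_ ?_
  · intro g hg g' hg' heq
    exact eq_of_oddSet_eq_of_agree_off_star t
      ((mem_filter.mp hg).2.trans (mem_filter.mp hg').2.symm) fun e he => congrFun heq ⟨e, he⟩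
  · intro h _
    refine ⟨adjustStar t univ S fun e => if he : Inc t e then false else h ⟨e, he⟩, ?_, ?_⟩
    · exact mem_filter.mpr ⟨mem_univ _,
        oddSet_eq_of_forall_ne hS ht fun u hu => odd_gDegree_adjustStar (mem_univ u) hu⟩
    · funext e
      simp [adjustStar_of_not, e.2]

def Prescribed (S : Finset (Fin n)) (s t : Fin n) (e : EdgeIdx n) : Prop :=
  (e.1.1 ∈ S ∧ e.1.2 ∈ S) ∨ (e.1.1 ∉ S ∧ e.1.2 ∉ S) ∨
    ((e.1.1 ∈ S ∧ e.1.1 ≠ s ∧ e.1.2 ∉ S ∧ e.1.2 ≠ t) ∨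
      (e.1.2 ∈ S ∧ e.1.2 ≠ s ∧ e.1.1 ∉ S ∧ e.1.1 ≠ t))

section Prescribed

variable {S : Finset (Fin n)} {s t : Fin n}

lemma not_prescribed_iff (hs : s ∈ S) (ht : t ∉ S) :
    ¬Prescribed S s t e ↔ (Inc s e ∧ other s e ∉ S) ∨ (Inc t e ∧ other t e ∈ S) := by
  rcases e with ⟨⟨a, b⟩, hab⟩
  unfold Prescribed other
  by_cases ha : a ∈ S <;> by_cases hb : b ∈ S <;> simp [Inc, ha, hb] <;> grind

lemma eq_of_oddSet_eq_of_agree_prescribed (hs : s ∈ S) (ht : t ∉ S) (hg : oddSet n g = S)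
    (hg' : oddSet n g' = S) (h : ∀ e, Prescribed S s t e → g e = g' e) : g = g' := by
  -- for `u ∉ S`, `u ≠ t`, the edge `su` is the only unprescribed edge at `u`
  have hstar : ∀ e, Inc s e → other s e ∉ S → other s e ≠ t → g e = g' e := by
    intro e hse hS' ht'
    refine eq_of_agree_of_odd_gDegree_iff (inc_other s e) (fun e' hu hne => h e' ?_)
      (by rw [← mem_oddSet, ← mem_oddSet, hg, hg'])
    rw [← not_not (a := Prescribed S s t e'), not_prescribed_iff hs ht]
    rintro (⟨hse', -⟩ | ⟨hte', hother⟩)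
    · exact hne (eq_of_inc_of_inc (other_ne s e) hu hse' (inc_other s e) hse)
    · exact hS' (other_eq_of_inc ht'.symm hte' hu ▸ hother)
  refine eq_of_oddSet_eq_of_agree_off_star t (hg.trans hg'.symm) fun e hte => ?_
  by_cases hp : Prescribed S s t e
  · exact h e hp
  · obtain ⟨hse, hother⟩ :=
      ((not_prescribed_iff hs ht).mp hp).resolve_right fun h' => hte h'.1
    exact hstar e hse hother fun h' => hte (h' ▸ inc_other s e)

lemma exists_oddSet_eq_and_agree_prescribed (hS : Even #S) (hs : s ∈ S) (ht : t ∉ S)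
    (g₀ : EdgeIdx n → Bool) :
    ∃ g, oddSet n g = S ∧ ∀ e, Prescribed S s t e → g e = g₀ e := by
  refine ⟨adjustStar t S S (adjustStar s Sᶜ S g₀),
    oddSet_eq_of_forall_ne hS ht fun u hut => ?_, fun e hp => ?_⟩
  · by_cases hu : u ∈ S
    · exact odd_gDegree_adjustStar hu hut
    · rw [gDegree_adjustStar_of_notMem hu hut]
      exact odd_gDegree_adjustStar (mem_compl.mpr hu) fun h => hu (h ▸ hs)
  · obtain ⟨hs', ht'⟩ := not_or.mp fun h' => (not_prescribed_iff hs ht).mpr h' hp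
    rw [adjustStar_of_not ht', adjustStar_of_not (by simpa using hs')]

lemma card_filter_oddSet_eq_and_agree (hS : Even #S) (hs : s ∈ S) (ht : t ∉ S)
    (g1 g2 g3 : EdgeIdx n → Bool) :
    #{g : EdgeIdx n → Bool | oddSet n g = S ∧
        (∀ e : EdgeIdx n, e.1.1 ∈ S → e.1.2 ∈ S → g e = g1 e) ∧
        (∀ e : EdgeIdx n, e.1.1 ∉ S → e.1.2 ∉ S → g e = g2 e) ∧
        (∀ e : EdgeIdx n,
          ((e.1.1 ∈ S ∧ e.1.1 ≠ s ∧ e.1.2 ∉ S ∧ e.1.2 ≠ t) ∨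
           (e.1.2 ∈ S ∧ e.1.2 ≠ s ∧ e.1.1 ∉ S ∧ e.1.1 ≠ t)) → g e = g3 e)} = 1 := by
  obtain ⟨g, hg, hagree⟩ := exists_oddSet_eq_and_agree_prescribed hS hs ht fun e =>
    if e.1.1 ∈ S ∧ e.1.2 ∈ S then g1 e else if e.1.1 ∉ S ∧ e.1.2 ∉ S then g2 e else g3 e
  have hin : ∀ e : EdgeIdx n, e.1.1 ∈ S → e.1.2 ∈ S → g e = g1 e := fun e h1 h2 => by
    simp [hagree e (.inl ⟨h1, h2⟩), h1, h2]
  have hout : ∀ e : EdgeIdx n, e.1.1 ∉ S → e.1.2 ∉ S → g e = g2 e := fun e h1 h2 => by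
    simp [hagree e (.inr (.inl ⟨h1, h2⟩)), h1, h2]
  have hcross : ∀ e : EdgeIdx n,
      ((e.1.1 ∈ S ∧ e.1.1 ≠ s ∧ e.1.2 ∉ S ∧ e.1.2 ≠ t) ∨
        (e.1.2 ∈ S ∧ e.1.2 ≠ s ∧ e.1.1 ∉ S ∧ e.1.1 ≠ t)) → g e = g3 e := by
    intro e h
    rw [hagree e (.inr (.inr h))]
    rcases h with ⟨h1, -, h2, -⟩ | ⟨h2, -, h1, -⟩ <;> simp [h1, h2]
  refine card_eq_one.mpr ⟨g, eq_singleton_iff_unique_mem.mpr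
    ⟨mem_filter.mpr ⟨mem_univ _, hg, hin, hout, hcross⟩, fun g' hg' => ?_⟩⟩
  obtain ⟨hg', hin', hout', hcross'⟩ := (mem_filter.mp hg').2
  refine eq_of_oddSet_eq_of_agree_prescribed hs ht hg' hg fun e hp => ?_
  rcases hp with ⟨h1, h2⟩ | ⟨h1, h2⟩ | h
  · rw [hin e h1 h2, hin' e h1 h2]
  · rw [hout e h1 h2, hout' e h1 h2]
  · rw [hcross e h, hcross' e h]

end Prescribed

lemma choose_two_add_choose_two_add_mul {n k : ℕ} (hk0 : 0 < k) (hkn : k < n) :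
    k.choose 2 + (n - k).choose 2 + (k - 1) * (n - k - 1) = (n - 1).choose 2 := by
  obtain ⟨a, rfl⟩ : ∃ a, k = a + 1 := ⟨k - 1, by omega⟩
  obtain ⟨b, rfl⟩ : ∃ b, n = a + b + 2 := ⟨n - a - 2, by omega⟩
  rw [show a + b + 2 - (a + 1) = b + 1 by omega, show a + b + 2 - 1 = a + b + 1 by omega]
  apply Nat.cast_injective (R := ℚ)
  push_cast [Nat.cast_choose_two]
  ring

/-- Let `G ∼ G(n, 1/2)`, fix `S ⊆ V` with `|S| = k` even, `0 < k < n`,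
and vertices `s ∈ S`, `t ∉ S`.  Conditioned on the odd-degree vertex set of `G`
being exactly `S`, the triple (induced subgraph on `S`, induced subgraph on the
complement of `S`, bipartite graph of edges between `S \ {s}` and `S̄ \ {t}`)
is distributed as independent uniform samples; i.e. for any fixed configurations
`g1, g2, g3` of those three edge-sets, the conditional probability of matching all
three is `(1/2)^{C(k,2)} · (1/2)^{C(n−k,2)} · (1/2)^{(k−1)(n−k−1)}`. -/
theorem stmt_6 (n k : ℕ) (hke : Even k) (hk0 : 0 < k) (hkn : k < n)
    (S : Finset (Fin n)) (hS : S.card = k) (s t : Fin n) (hs : s ∈ S) (ht : t ∉ S)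
    (g1 g2 g3 : EdgeIdx n → Bool) :
    ((Finset.univ.filter fun g : EdgeIdx n → Bool =>
        oddSet n g = S ∧
        (∀ e : EdgeIdx n, e.1.1 ∈ S → e.1.2 ∈ S → g e = g1 e) ∧
        (∀ e : EdgeIdx n, e.1.1 ∉ S → e.1.2 ∉ S → g e = g2 e) ∧
        (∀ e : EdgeIdx n,
          ((e.1.1 ∈ S ∧ e.1.1 ≠ s ∧ e.1.2 ∉ S ∧ e.1.2 ≠ t) ∨
           (e.1.2 ∈ S ∧ e.1.2 ≠ s ∧ e.1.1 ∉ S ∧ e.1.1 ≠ t)) → g e = g3 e)).card : ℚ)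
      / ((Finset.univ.filter fun g : EdgeIdx n → Bool => oddSet n g = S).card : ℚ)
    = (1 / 2 : ℚ) ^ k.choose 2 * (1 / 2 : ℚ) ^ (n - k).choose 2
        * (1 / 2 : ℚ) ^ ((k - 1) * (n - k - 1)) := by
  have hSeven : Even #S := hS ▸ hke
  rw [card_filter_oddSet_eq_and_agree hSeven hs ht, card_filter_oddSet_eq hSeven ht,
    ← pow_add, ← pow_add, choose_two_add_choose_two_add_mul hk0 hkn, one_div_pow]
  norm_cast
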